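/- arXiv:0709.1627 — 2 statements merged into one kernel-verified Lean document; each statement's English description precedes it below -/
import Mathlib

section
/- Let a, b ∈ ℤ with b > 0, a > 1 and gcd(a, b) = 1, and let σ := ℝ_{≥0}(1,0) + ℝ_{≥0}(a,b) ⊆ ℝ², so that σ^∨ = ℝ_{≥0}(0,1) + ℝ_{≥0}(b,−a). Let ω := (1, (1−a)/b) ∈ σ^∨, which satisfies ⟨ω,(1,0)⟩ = ⟨ω,(a,b)⟩ = 1. If ω ∈ Q(m), i.e. there exists u ∈ (σ^∨ ∩ ℤ²) \ {0} with ω − u ∈ σ^∨, then b divides 1 − a; in particular ω ∈ ℤ². -/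
open Finset Filter Pointwise

noncomputable section

namespace Paper

variable {d n : ℕ}

/-- The standard inner product pairing on `ℝ^d`. -/
def pair (u w : Fin d → ℝ) : ℝ := ∑ i, u i * w i

/-- The coercion `ℤ^d → ℝ^d`. -/
def toR (u : Fin d → ℤ) : Fin d → ℝ := fun i => (u i : ℝ)

/-- The cone generated by the integer vectors `v 1, …, v n`. -/
def cone (v : Fin n → Fin d → ℤ) : Set (Fin d → ℝ) :=
  {x | ∃ c : Fin n → ℝ, (∀ j, 0 ≤ c j) ∧ x = ∑ j, c j • toR (v j)}

/-- The dual cone `σ^∨ = {u | ⟨u, x⟩ ≥ 0 for all x ∈ σ}`. -/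
def dualCone (v : Fin n → Fin d → ℤ) : Set (Fin d → ℝ) :=
  {u | ∀ x ∈ cone v, 0 ≤ pair u x}

/-- Strong convexity of the cone generated by `v`. -/
def StronglyConvex (v : Fin n → Fin d → ℤ) : Prop :=
  ∀ x ∈ cone v, -x ∈ cone v → x = 0

/-- An integer vector is primitive if the gcd of its coordinates is 1. -/
def IsPrimitive (w : Fin d → ℤ) : Prop := Finset.univ.gcd w = 1

/-- The cone generated by `v` is `d`-dimensional. -/
def FullDim (v : Fin n → Fin d → ℤ) : Prop :=
  Submodule.span ℝ (Set.range fun j => toR (v j)) = ⊤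

/-- The Newton polyhedron `P(A) = conv(A) + σ^∨`. -/
def newton (v : Fin n → Fin d → ℤ) (A : Finset (Fin d → ℤ)) : Set (Fin d → ℝ) :=
  convexHull ℝ (toR '' ↑A) + dualCone v

/-- The set `Q(A) = ⋃_{a ∈ A} (a + σ^∨)`. -/
def QSet (v : Fin n → Fin d → ℤ) (A : Finset (Fin d → ℤ)) : Set (Fin d → ℝ) :=
  ⋃ a ∈ A, (toR a +ᵥ dualCone v)

/-- `λ_A(u) = sup {λ > 0 | u ∈ λ·P(A)}` (and `0` if no such `λ` exists;
note `Real.sSup` of the empty set is `0`). -/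
def lam (v : Fin n → Fin d → ℤ) (A : Finset (Fin d → ℤ)) (u : Fin d → ℝ) : ℝ :=
  sSup {l : ℝ | 0 < l ∧ u ∈ l • newton v A}

/-- `Q(m)` for the maximal monomial ideal, whose exponent set is
`(σ^∨ ∩ ℤ^d) \ {0}`. -/
def Qm (v : Fin n → Fin d → ℤ) : Set (Fin d → ℝ) :=
  ⋃ a ∈ {a : Fin d → ℤ | toR a ∈ dualCone v ∧ a ≠ 0}, (toR a +ᵥ dualCone v)

/-- The set `O = {u ∈ σ^∨ | ⟨u, v_j⟩ ≥ 1 for some j}`. -/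
def OSet (v : Fin n → Fin d → ℤ) : Set (Fin d → ℝ) :=
  {u ∈ dualCone v | ∃ j, 1 ≤ pair u (toR (v j))}

/-! Write `ω = u + y` with `u` a nonzero lattice point of `σ^∨` and `y ∈ σ^∨`. Since `ω` pairs to `1`
with both generators `(1,0)` and `(a,b)` of `σ`, the integers `u₀` and `a u₀ + b u₁` lie in `{0,1}`.
If `u₀ = 0` then `b u₁ = 1`; if `u₀ = 1` then either `a + b u₁ = 0`, so `b ∣ a` and `b` is a unit
by coprimality, or `a + b u₁ = 1`, i.e. `b ∣ 1 - a`. -/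

lemma toR_mem_cone (v : Fin n → Fin d → ℤ) (j : Fin n) : toR (v j) ∈ cone v := by
  refine ⟨Pi.single j 1, fun k => by by_cases hk : k = j <;> simp [hk], ?_⟩
  simp [Pi.single_apply]

lemma pair_sub_left (x y w : Fin d → ℝ) : pair (x - y) w = pair x w - pair y w := by
  simp only [pair, Pi.sub_apply, sub_mul, Finset.sum_sub_distrib]

lemma pair_toR (u w : Fin d → ℤ) : pair (toR u) (toR w) = ((∑ i, u i * w i : ℤ) : ℝ) := by
  simp [pair, toR]

lemma exists_ne_zero_pair_le_of_mem_Qm {v : Fin n → Fin d → ℤ} {ω : Fin d → ℝ}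
    (h : ω ∈ Qm v) :
    ∃ u : Fin d → ℤ, u ≠ 0 ∧ ∀ j, 0 ≤ ∑ i, u i * v j i ∧
      ((∑ i, u i * v j i : ℤ) : ℝ) ≤ pair ω (toR (v j)) := by
  simp only [Qm, Set.mem_iUnion₂, Set.mem_vadd_set, vadd_eq_add] at h
  obtain ⟨u, ⟨hu, hu0⟩, y, hy, rfl⟩ := h
  refine ⟨u, hu0, fun j => ⟨?_, ?_⟩⟩
  · exact_mod_cast (pair_toR u (v j)) ▸ hu _ (toR_mem_cone v j)
  · rw [← pair_toR, ← sub_nonneg, ← pair_sub_left, add_sub_cancel_left]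
    exact hy _ (toR_mem_cone v j)

lemma dvd_one_sub_of_bounds {a b u₀ u₁ : ℤ} (hb : b ≠ 0) (hab : IsCoprime a b)
    (hu : u₀ ≠ 0 ∨ u₁ ≠ 0) (h₀ : 0 ≤ u₀ ∧ u₀ ≤ 1)
    (h₁ : 0 ≤ u₀ * a + u₁ * b ∧ u₀ * a + u₁ * b ≤ 1) : b ∣ 1 - a := by
  obtain rfl | rfl : u₀ = 0 ∨ u₀ = 1 := by omega
  · have hbu : u₁ * b = 1 := by
      have : u₁ * b ≠ 0 := mul_ne_zero (hu.resolve_left (by simp)) hb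
      simp only [zero_mul, zero_add] at h₁
      omega
    exact dvd_trans ⟨u₁, by linarith⟩ (one_dvd _)
  · obtain h | h : a + u₁ * b = 0 ∨ a + u₁ * b = 1 := by omega
    · exact (hab.isUnit_of_dvd' ⟨-u₁, by linarith⟩ dvd_rfl).dvd
    · exact ⟨u₁, by linarith⟩

theorem dim_two_omega_in_Qm_general
    (a b : ℤ) (hb : 0 < b) (hgcd : Int.gcd a b = 1)
    (v : Fin 2 → Fin 2 → ℤ) (hv : v = ![![1, 0], ![a, b]])
    (ω : Fin 2 → ℝ) (hω : ω = ![1, ((1 - a : ℤ) : ℝ) / (b : ℝ)])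
    (hmem : ω ∈ Qm v) :
    b ∣ (1 - a) ∧ ∃ z : Fin 2 → ℤ, ω = toR z := by
  obtain ⟨u, hu, hbound⟩ := exists_ne_zero_pair_le_of_mem_Qm hmem
  subst hv hω
  have hb' : (b : ℝ) ≠ 0 := by positivity
  have hω₀ : pair ![1, ((1 - a : ℤ) : ℝ) / (b : ℝ)] (toR ![1, 0]) = 1 := by
    simp [pair, toR]
  have hω₁ : pair ![1, ((1 - a : ℤ) : ℝ) / (b : ℝ)] (toR ![a, b]) = 1 := by
    simp [pair, toR]; field_simp; ring
  have h₀ := hbound 0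
  have h₁ := hbound 1
  simp only [Matrix.cons_val_zero, Matrix.cons_val_one, hω₀, hω₁,
    Fin.sum_univ_two, mul_one, mul_zero, add_zero] at h₀ h₁
  norm_cast at h₀ h₁
  have hu' : u 0 ≠ 0 ∨ u 1 ≠ 0 := by
    by_contra! h
    exact hu (funext (Fin.forall_fin_two.mpr h))
  obtain ⟨k, hk⟩ :=
    dvd_one_sub_of_bounds hb.ne' (Int.isCoprime_iff_gcd_eq_one.mpr hgcd) hu' h₀ h₁
  refine ⟨⟨k, hk⟩, ![1, k], ?_⟩
  ext i
  fin_cases i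
  · simp [toR]
  · simp [toR, hk, hb']

/-- for `σ = ℝ_{≥0}(1,0) + ℝ_{≥0}(a,b)` with `b > 0`, `a > 1`,
`gcd(a,b) = 1` and `ω = (1, (1-a)/b)`, if `ω ∈ Q(m)` then `b ∣ 1 - a`;
in particular `ω` is a lattice point. -/
theorem dim_two_omega_in_Qm
    (a b : ℤ) (hb : 0 < b) (ha : 1 < a) (hgcd : Int.gcd a b = 1)
    (v : Fin 2 → Fin 2 → ℤ) (hv : v = ![![1, 0], ![a, b]])
    (ω : Fin 2 → ℝ) (hω : ω = ![1, ((1 - a : ℤ) : ℝ) / (b : ℝ)])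
    (hmem : ω ∈ Qm v) :
    b ∣ (1 - a) ∧ ∃ z : Fin 2 → ℤ, ω = toR z :=
  dim_two_omega_in_Qm_general a b hb hgcd v hv ω hω hmem

end Paper
end
end

section
/- Let a be the monomial ideal of R with exponent set A and J the monomial ideal with exponent set B, with a ⊆ √J. For every e ≥ 1 there exists u ∈ σ^∨ \ Q(B) such that ν_a^J(p^e)/p^e ≤ λ_A(u). -/
/-!
A monomial `X^c` of `a^ν \ J^{[q]}`, with `ν = ν_a^J(q)`, has exponent `c = a₁ + ⋯ + a_ν + m`
with `aᵢ ∈ A` and `m ∈ σ^∨`, but `c ∉ q·B + σ^∨`. Hence `u = c / q` lies outside `Q(B)` and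
in `(ν / q)·P(A)`, so `ν / q ≤ λ_A(u)`; the supremum defining `λ_A(u)` is finite because the
linear form `⟨·, v₁ + ⋯ + v_n⟩` is positive on `A` when `a` is proper, hence bounded below by a
positive constant on `P(A)`.
-/

open Finset Filter Pointwise

noncomputable section

namespace Paper

variable {d n : ℕ}

/-- The additive submonoid `σ^∨ ∩ ℤ^d` of `ℤ^d`. -/
def latt (v : Fin n → Fin d → ℤ) : AddSubmonoid (Fin d → ℤ) where
  carrier := {u | toR u ∈ dualCone v}
  zero_mem' := by
    intro x hx
    simp [pair, toR]
  add_mem' := by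
    intro a b ha hb x hx
    have h : pair (toR (a + b)) x = pair (toR a) x + pair (toR b) x := by
      simp [pair, toR, add_mul, Finset.sum_add_distrib]
    have h2 := add_nonneg (ha x hx) (hb x hx)
    rw [h]
    exact h2

/-- The toric ring `R = k[σ^∨ ∩ ℤ^d]`, as the monoid algebra of the
additive monoid `σ^∨ ∩ ℤ^d` over `k`. -/
abbrev Toric (k : Type) [Field k] (v : Fin n → Fin d → ℤ) : Type :=
  AddMonoidAlgebra k (latt v)

/-- The monomial ideal of `R` with exponent set `A`: the ideal generated by
the monomials `X^a`, `a ∈ A`. -/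
def monIdeal (k : Type) [Field k] (v : Fin n → Fin d → ℤ) (A : Finset (Fin d → ℤ)) :
    Ideal (Toric k v) :=
  Ideal.span {x | ∃ a : latt v, (a : Fin d → ℤ) ∈ A ∧ x = AddMonoidAlgebra.single a 1}

/-- The maximal monomial ideal of `R`, generated by all monomials `X^u`
with `u ∈ (σ^∨ ∩ ℤ^d) \ {0}`. -/
def maxMonIdeal (k : Type) [Field k] (v : Fin n → Fin d → ℤ) : Ideal (Toric k v) :=
  Ideal.span {x | ∃ a : latt v, a ≠ 0 ∧ x = AddMonoidAlgebra.single a 1}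

/-- The bracket power `J^{[q]}`: the ideal generated by the `q`-th powers of
elements of `J`. -/
def bracket {S : Type*} [CommRing S] (J : Ideal S) (q : ℕ) : Ideal S :=
  Ideal.span ((fun x => x ^ q) '' (J : Set S))

/-- `ν_a^J(q) = max {r ∈ ℕ | a^r ⊄ J^{[q]}}`. -/
def nuF {S : Type*} [CommRing S] (a J : Ideal S) (q : ℕ) : ℕ :=
  sSup {r : ℕ | ¬ a ^ r ≤ bracket J q}


section MonomialIdeal

variable {k M : Type*} [CommRing k] [AddCommMonoid M]

open AddMonoidAlgebra

theorem span_of'_image_pow_le (T : Set M) (ν : ℕ) :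
    Ideal.span (of' k M '' T) ^ ν ≤
      Ideal.span (of' k M '' {s | ∃ g : Fin ν → M, (∀ i, g i ∈ T) ∧ ∑ i, g i = s}) := by
  induction ν with
  | zero =>
    rw [pow_zero, Ideal.one_eq_top, top_le_iff, Ideal.eq_top_iff_one]
    exact Ideal.subset_span ⟨0, ⟨Fin.elim0, fun i => i.elim0, by simp⟩, rfl⟩
  | succ ν ih =>
    rw [pow_succ']
    refine (Ideal.mul_mono_right ih).trans ?_
    rw [Ideal.span_mul_span', Ideal.span_le]
    rintro _ ⟨_, ⟨t, ht, rfl⟩, _, ⟨_, ⟨g, hg, rfl⟩, rfl⟩, rfl⟩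
    refine Ideal.subset_span ⟨t + ∑ i, g i, ⟨Fin.cons t g, ?_, ?_⟩, ?_⟩
    · exact Fin.cases ht hg
    · simp [Fin.sum_univ_succ]
    · simp [of'_apply, single_mul_single]

theorem span_of'_image_nsmul_le_bracket (T : Set M) (q : ℕ) :
    Ideal.span (of' k M '' ((q • ·) '' T)) ≤ bracket (Ideal.span (of' k M '' T)) q := by
  rw [Ideal.span_le]
  rintro _ ⟨_, ⟨t, ht, rfl⟩, rfl⟩
  refine Ideal.subset_span ⟨of' k M t, Ideal.subset_span ⟨t, ht, rfl⟩, ?_⟩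
  simp [of'_apply, single_pow]

end MonomialIdeal

section BracketPower

variable {S : Type*} [CommRing S]

theorem bracket_le_self (J : Ideal S) {q : ℕ} (hq : q ≠ 0) : bracket J q ≤ J := by
  rw [bracket, Ideal.span_le]
  rintro _ ⟨x, hx, rfl⟩
  exact J.pow_mem_of_mem hx q (Nat.pos_of_ne_zero hq)

theorem not_pow_nuF_le_bracket {a J : Ideal S} {q : ℕ} (h : bracket J q ≠ ⊤) :
    ¬ a ^ nuF a J q ≤ bracket J q := by
  have h0 : 0 ∈ {r : ℕ | ¬ a ^ r ≤ bracket J q} := by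
    simpa [Ideal.one_eq_top, top_le_iff] using h
  by_cases hb : BddAbove {r : ℕ | ¬ a ^ r ≤ bracket J q}
  · exact Nat.sSup_mem ⟨0, h0⟩ hb
  · rwa [nuF, csSup_of_not_bddAbove hb, csSup_empty]

end BracketPower

section Geometry

variable {v : Fin n → Fin d → ℤ}

theorem pair_eq_dotProduct (u w : Fin d → ℝ) : pair u w = u ⬝ᵥ w := rfl

theorem toR_add (a b : Fin d → ℤ) : toR (a + b) = toR a + toR b := by
  funext i; simp [toR]

theorem toR_sub (a b : Fin d → ℤ) : toR (a - b) = toR a - toR b := by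
  funext i; simp [toR]

theorem toR_neg (a : Fin d → ℤ) : toR (-a) = -toR a := by
  funext i; simp [toR]

theorem toR_nsmul (q : ℕ) (a : Fin d → ℤ) : toR (q • a) = (q : ℝ) • toR a := by
  funext i; simp [toR]

theorem toR_sum {ι : Type*} (s : Finset ι) (g : ι → Fin d → ℤ) :
    toR (∑ i ∈ s, g i) = ∑ i ∈ s, toR (g i) := by
  funext i; simp [toR]

theorem smul_mem_dualCone {r : ℝ} (hr : 0 ≤ r) {u : Fin d → ℝ} (hu : u ∈ dualCone v) :
    r • u ∈ dualCone v := fun x hx => by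
  rw [pair_eq_dotProduct, smul_dotProduct]
  exact mul_nonneg hr (hu x hx)

theorem toR_gen_mem_cone (j : Fin n) : toR (v j) ∈ cone v :=
  ⟨Pi.single j 1, fun i => by by_cases h : i = j <;> simp [h], by simp [Pi.single_apply]⟩

theorem sum_toR_gen_mem_cone : ∑ j, toR (v j) ∈ cone v :=
  ⟨1, fun _ => zero_le_one, by simp⟩

theorem neg_mem_dualCone_of_pair_eq_zero {u : Fin d → ℝ} (hu : ∀ j, pair u (toR (v j)) = 0) :
    -u ∈ dualCone v := by
  rintro _ ⟨c, -, rfl⟩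
  rw [pair_eq_dotProduct, neg_dotProduct, dotProduct_sum]
  simp [dotProduct_smul, ← pair_eq_dotProduct, hu]

theorem pair_sum_toR_gen_pos {u : Fin d → ℝ} (hu : u ∈ dualCone v) (hnu : -u ∉ dualCone v) :
    0 < pair u (∑ j, toR (v j)) := by
  have hgen : ∀ j ∈ Finset.univ, 0 ≤ pair u (toR (v j)) := fun j _ => hu _ (toR_gen_mem_cone j)
  rw [pair_eq_dotProduct, dotProduct_sum]
  refine (Finset.sum_nonneg hgen).lt_of_ne fun hzero => hnu ?_
  exact neg_mem_dualCone_of_pair_eq_zero fun j =>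
    (Finset.sum_eq_zero_iff_of_nonneg hgen).mp hzero.symm j (Finset.mem_univ j)

theorem exists_pos_le_pair_of_mem_convexHull {A : Finset (Fin d → ℤ)} (hA : A.Nonempty)
    {x₀ : Fin d → ℝ} (hpos : ∀ a ∈ A, 0 < pair (toR a) x₀) :
    ∃ ε > 0, ∀ w ∈ convexHull ℝ (toR '' ↑A), ε ≤ pair w x₀ := by
  set ε := A.inf' hA fun a => pair (toR a) x₀
  have hhull : convexHull ℝ (toR '' ↑A) ⊆ {w | ε ≤ pair w x₀} := by
    refine convexHull_min ?_ (convex_halfSpace_ge ?_ _)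
    · rintro _ ⟨a, ha, rfl⟩
      exact Finset.inf'_le (fun a => pair (toR a) x₀) ha
    · exact ⟨fun w w' => add_dotProduct w w' x₀, fun r w => smul_dotProduct r w x₀⟩
  exact ⟨ε, (Finset.lt_inf'_iff hA).mpr hpos, fun w hw => hhull hw⟩

theorem lam_nonneg (A : Finset (Fin d → ℤ)) (u : Fin d → ℝ) : 0 ≤ lam v A u :=
  Real.sSup_nonneg fun _ hl => hl.1.le

theorem le_lam_of_mem_smul_newton {A : Finset (Fin d → ℤ)} {x₀ : Fin d → ℝ} (hx₀ : x₀ ∈ cone v)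
    (hpos : ∀ a ∈ A, 0 < pair (toR a) x₀) {l : ℝ} {u : Fin d → ℝ} (hl : 0 < l)
    (hu : u ∈ l • newton v A) : l ≤ lam v A u := by
  obtain ⟨_, ⟨w, hw, -⟩, -⟩ := id hu
  have hA : A.Nonempty := by
    simpa using (convexHull_nonempty_iff.mp ⟨w, hw⟩).of_image
  obtain ⟨ε, hε, hεA⟩ := exists_pos_le_pair_of_mem_convexHull hA hpos
  refine le_csSup ⟨pair u x₀ / ε, ?_⟩ ⟨hl, hu⟩
  rintro l' ⟨hl', _, ⟨w', hw', y, hy, rfl⟩, rfl⟩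
  rw [le_div_iff₀ hε, pair_eq_dotProduct, smul_dotProduct, add_dotProduct, smul_eq_mul]
  have hw'ε : ε ≤ w' ⬝ᵥ x₀ := hεA w' hw'
  have hyx₀ : 0 ≤ y ⬝ᵥ x₀ := hy x₀ hx₀
  nlinarith

theorem toR_sum_add_mem_smul_newton {A : Finset (Fin d → ℤ)} {ν : ℕ} (hν : ν ≠ 0)
    {g : Fin ν → Fin d → ℤ} (hg : ∀ i, g i ∈ A) {m : Fin d → ℤ} (hm : toR m ∈ dualCone v) :
    toR (∑ i, g i + m) ∈ (ν : ℝ) • newton v A := by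
  have hνR : (ν : ℝ) ≠ 0 := Nat.cast_ne_zero.mpr hν
  have hmean : (ν : ℝ)⁻¹ • ∑ i, toR (g i) ∈ convexHull ℝ (toR '' ↑A) := by
    refine mem_convexHull_of_exists_fintype (fun _ => (ν : ℝ)⁻¹) (fun i => toR (g i))
      (fun _ => by positivity) ?_ (fun i => ⟨g i, hg i, rfl⟩) (Finset.smul_sum ..).symm
    simp [hνR]
  have hsplit : toR (∑ i, g i + m) =
      (ν : ℝ) • ((ν : ℝ)⁻¹ • ∑ i, toR (g i) + (ν : ℝ)⁻¹ • toR m) := by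
    rw [smul_add, smul_inv_smul₀ hνR, smul_inv_smul₀ hνR, toR_add, toR_sum]
  rw [hsplit]
  exact Set.smul_mem_smul_set (Set.add_mem_add hmean (smul_mem_dualCone (by positivity) hm))

theorem exists_sub_nsmul_mem_dualCone_of_mem_QSet {B : Finset (Fin d → ℤ)} {q : ℕ} (hq : 0 < q)
    {c : Fin d → ℤ} (hc : (q : ℝ)⁻¹ • toR c ∈ QSet v B) :
    ∃ b ∈ B, toR (c - q • b) ∈ dualCone v := by
  simp only [QSet, Set.mem_iUnion] at hc
  obtain ⟨b, hb, w, hw, hcw⟩ := hc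
  refine ⟨b, hb, ?_⟩
  have hc : toR c = (q : ℝ) • (toR b + w) := by
    rw [show toR b + w = (q : ℝ)⁻¹ • toR c from hcw, smul_inv_smul₀ (by positivity)]
  have hcbw : toR (c - q • b) = (q : ℝ) • w := by
    rw [toR_sub, toR_nsmul, hc, smul_add, add_sub_cancel_left]
  rw [hcbw]
  exact smul_mem_dualCone (by positivity) hw

end Geometry

section ToricRing

variable {k : Type} [Field k] {v : Fin n → Fin d → ℤ}

open AddMonoidAlgebra

theorem monIdeal_eq_span_of' (A : Finset (Fin d → ℤ)) :
    monIdeal k v A = Ideal.span (of' k (latt v) '' {a | (a : Fin d → ℤ) ∈ A}) := by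
  simp only [monIdeal, of'_apply]
  congr 1
  ext x
  simp [eq_comm]

theorem neg_toR_notMem_dualCone {A : Finset (Fin d → ℤ)} (hA : monIdeal k v A ≠ ⊤)
    {a : latt v} (ha : (a : Fin d → ℤ) ∈ A) : -toR (a : Fin d → ℤ) ∉ dualCone v := by
  intro hneg
  let a' : latt v := ⟨-a, show toR (-(a : Fin d → ℤ)) ∈ dualCone v by rwa [toR_neg]⟩
  have hunit : IsUnit (of' k (latt v) a) :=
    .of_mul_eq_one_right (of' k (latt v) a') <| by
      rw [of'_apply, of'_apply, single_mul_single, one_mul, one_def]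
      exact congrArg (single · 1) (Subtype.ext (neg_add_cancel _))
  rw [monIdeal_eq_span_of'] at hA
  exact hA (Ideal.eq_top_of_isUnit_mem _ (Ideal.subset_span ⟨a, ha, rfl⟩) hunit)

theorem exists_mem_dualCone_diff_QSet_nuF_div_le_lam {A B : Finset (Fin d → ℤ)}
    (hAl : ∀ a ∈ A, toR a ∈ dualCone v) (hBl : ∀ b ∈ B, toR b ∈ dualCone v)
    (haP : monIdeal k v A ≠ ⊤) (hJP : monIdeal k v B ≠ ⊤) {q : ℕ} (hq : 0 < q) :
    ∃ u ∈ dualCone v \ QSet v B,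
      (nuF (monIdeal k v A) (monIdeal k v B) q : ℝ) / q ≤ lam v A u := by
  have hbr : bracket (monIdeal k v B) q ≠ ⊤ := fun h =>
    hJP (top_unique (h ▸ bracket_le_self _ hq.ne'))
  obtain ⟨f, hfa, hfJ⟩ :=
    SetLike.not_le_iff_exists.mp (not_pow_nuF_le_bracket (a := monIdeal k v A) hbr)
  set ν := nuF (monIdeal k v A) (monIdeal k v B) q
  rw [monIdeal_eq_span_of'] at hfa hfJ
  have hf_qB := mt (span_of'_image_nsmul_le_bracket _ q ·) hfJ
  rw [mem_ideal_span_of'_image] at hf_qB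
  push Not at hf_qB
  obtain ⟨c, hc, hc_qB⟩ := hf_qB
  obtain ⟨_, ⟨g, hg, rfl⟩, m, rfl⟩ :=
    mem_ideal_span_of'_image.mp (span_of'_image_pow_le _ _ hfa) c hc
  refine ⟨(q : ℝ)⁻¹ • toR ↑(m + ∑ i, g i),
    ⟨smul_mem_dualCone (by positivity) (m + ∑ i, g i).2, fun hQ => ?_⟩, ?_⟩
  · obtain ⟨b, hb, hcb⟩ := exists_sub_nsmul_mem_dualCone_of_mem_QSet hq hQ
    exact hc_qB _ ⟨⟨b, hBl b hb⟩, hb, rfl⟩ ⟨_, hcb⟩ (Subtype.ext (sub_add_cancel _ _).symm)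
  rcases Nat.eq_zero_or_pos ν with hν | hν
  · rw [show (ν : ℝ) = 0 by exact_mod_cast hν, zero_div]
    exact lam_nonneg A _
  have hApos : ∀ a ∈ A, 0 < pair (toR a) (∑ j, toR (v j)) := fun a ha =>
    pair_sum_toR_gen_pos (hAl a ha) (neg_toR_notMem_dualCone (a := ⟨a, hAl a ha⟩) haP ha)
  refine le_lam_of_mem_smul_newton sum_toR_gen_mem_cone hApos (by positivity) ?_
  rw [div_eq_inv_mul, ← smul_smul]
  refine Set.smul_mem_smul_set ?_
  simpa [add_comm] using toR_sum_add_mem_smul_newton hν.ne' (g := fun i => g i) hg m.2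

end ToricRing

theorem nu_le_lam_general
    (d n p : ℕ) (hp : p.Prime)
    (k : Type) [Field k]
    (v : Fin n → Fin d → ℤ)
    (A B : Finset (Fin d → ℤ))
    (hAl : ∀ a ∈ A, toR a ∈ dualCone v) (hBl : ∀ b ∈ B, toR b ∈ dualCone v)
    (haP : monIdeal k v A ≠ ⊤)
    (hJP : monIdeal k v B ≠ ⊤) :
    ∀ e : ℕ, 1 ≤ e →
      ∃ u ∈ dualCone v \ QSet v B,
        (nuF (monIdeal k v A) (monIdeal k v B) (p ^ e) : ℝ) / (p ^ e : ℝ) ≤ lam v A u := by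
  intro e _
  exact_mod_cast
    exists_mem_dualCone_diff_QSet_nuF_div_le_lam hAl hBl haP hJP (pow_pos hp.pos e)

/-- for every `e ≥ 1` there exists `u ∈ σ^∨ \ Q(B)` with
`ν_a^J(p^e)/p^e ≤ λ_A(u)`. -/
theorem nu_le_lam
    (d n p : ℕ) (hd : 1 ≤ d) (hp : p.Prime)
    (k : Type) [Field k] [CharP k p] [ExpChar k p] [PerfectRing k p]
    (v : Fin n → Fin d → ℤ)
    (hsc : StronglyConvex v) (hprim : ∀ j, IsPrimitive (v j))
    (A B : Finset (Fin d → ℤ))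
    (hAne : A.Nonempty) (hBne : B.Nonempty)
    (hAl : ∀ a ∈ A, toR a ∈ dualCone v) (hBl : ∀ b ∈ B, toR b ∈ dualCone v)
    (ha0 : monIdeal k v A ≠ ⊥) (haP : monIdeal k v A ≠ ⊤)
    (hJ0 : monIdeal k v B ≠ ⊥) (hJP : monIdeal k v B ≠ ⊤)
    (hrad : monIdeal k v A ≤ (monIdeal k v B).radical) :
    ∀ e : ℕ, 1 ≤ e →
      ∃ u ∈ dualCone v \ QSet v B,
        (nuF (monIdeal k v A) (monIdeal k v B) (p ^ e) : ℝ) / (p ^ e : ℝ) ≤ lam v A u :=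
  nu_le_lam_general d n p hp k v A B hAl hBl haP hJP

end Paper
end
end
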